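/- For every fixed l ≥ 1 and every n, the rainbow Turán number of the path with l edges satisfies ex*(n, P_l) ≤ ⌈(3l−2)/2⌉ · n. -/

import Mathlib

open SimpleGraph Finset

/-- `c` is a proper edge-coloring of `G`: distinct edges sharing a vertex get distinct colors. -/
def IsProperEdgeColoring {V β : Type*} (G : SimpleGraph V) (c : Sym2 V → β) : Prop :=
  ∀ ⦃e₁ e₂ : Sym2 V⦄, e₁ ∈ G.edgeSet → e₂ ∈ G.edgeSet → e₁ ≠ e₂ →
    (∃ v, v ∈ e₁ ∧ v ∈ e₂) → c e₁ ≠ c e₂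

/-- `G` contains a copy of `F` (as a subgraph). -/
def Contains {α V : Type*} (F : SimpleGraph α) (G : SimpleGraph V) : Prop :=
  ∃ f : α ↪ V, ∀ ⦃a b⦄, F.Adj a b → G.Adj (f a) (f b)

/-- `G`, edge-colored by `c`, contains a rainbow copy of `F`:
a copy of `F` all of whose edges receive distinct colors. -/
def HasRainbowCopy {α V β : Type*} (F : SimpleGraph α) (G : SimpleGraph V)
    (c : Sym2 V → β) : Prop :=
  ∃ f : α ↪ V, (∀ ⦃a b⦄, F.Adj a b → G.Adj (f a) (f b)) ∧
    ∀ e₁ ∈ F.edgeSet, ∀ e₂ ∈ F.edgeSet, c (e₁.map ⇑f) = c (e₂.map ⇑f) → e₁ = e₂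

/-- The set of edge-counts of `n`-vertex graphs admitting a proper edge-coloring
with no rainbow copy of `F`; its greatest element is the rainbow Turán number `ex*(n,F)`. -/
def rainbowExSet (n : ℕ) {α : Type*} (F : SimpleGraph α) : Set ℕ :=
  {m | ∃ (G : SimpleGraph (Fin n)) (c : Sym2 (Fin n) → ℕ),
    IsProperEdgeColoring G c ∧ ¬ HasRainbowCopy F G c ∧ G.edgeSet.ncard = m}

/-- The set of edge-counts of `n`-vertex `F`-free graphs; its greatest element
is the Turán number `ex(n,F)`. -/
def exSet (n : ℕ) {α : Type*} (F : SimpleGraph α) : Set ℕ :=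
  {m | ∃ G : SimpleGraph (Fin n), ¬ Contains F G ∧ G.edgeSet.ncard = m}

/-- The matching `M_k` with `k` edges: vertices `2i` and `2i+1` are matched. -/
def matchingGraph (k : ℕ) : SimpleGraph (Fin (2 * k)) :=
  SimpleGraph.fromRel (fun a b => (a : ℕ) / 2 = (b : ℕ) / 2)

/-- The forest of `k` vertex-disjoint stars where the `i`-th star has `a i` edges
(the vertex `⟨i, 0⟩` being the center of the `i`-th star). -/
def starForest {k : ℕ} (a : Fin k → ℕ) : SimpleGraph (Σ i, Fin (a i + 1)) :=
  SimpleGraph.fromRel (fun x y => x.1 = y.1 ∧ (x.2 : ℕ) = 0)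

/-!
Take a longest rainbow path `w 0, …, w k`; then `k < l`. An edge leaving the path at either end
must repeat a path color, and the colors at a vertex are distinct. So `w k` has at most `k`
neighbours through path colors, and every other neighbour is some `w t` joined by a chord of a new
color. Rerouting the path through such a chord frees the color of `w t w (t + 1)`, which therefore
appears on no edge from `w 0` leaving the path. Counting gives `deg (w 0) + deg (w k) ≤ 3 k`, so
some non-isolated vertex has degree at most `(3 l - 1) / 2`. Both hypotheses pass to subgraphs,
so deleting the edges at such vertices one at a time bounds the number of edges.
-/

section Coloring

variable {V β : Type*} {G H : SimpleGraph V} {c : Sym2 V → β}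

theorem IsProperEdgeColoring.mono (hc : IsProperEdgeColoring G c) (hHG : H ≤ G) :
    IsProperEdgeColoring H c :=
  fun _ _ h₁ h₂ => hc (edgeSet_mono hHG h₁) (edgeSet_mono hHG h₂)

theorem HasRainbowCopy.mono {α : Type*} {F : SimpleGraph α} (h : HasRainbowCopy F H c)
    (hHG : H ≤ G) : HasRainbowCopy F G c :=
  let ⟨f, hf, hrainbow⟩ := h
  ⟨f, fun _ _ hab => hHG (hf hab), hrainbow⟩

theorem IsProperEdgeColoring.injOn_neighborSet (hc : IsProperEdgeColoring G c) (v : V) :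
    Set.InjOn (fun x => c s(v, x)) (G.neighborSet v) := by
  intro x hx y hy hxy
  by_contra hne
  exact hc hx hy (mt Sym2.congr_right.mp hne) ⟨v, Sym2.mem_mk_left v x, Sym2.mem_mk_left v y⟩ hxy

variable [Fintype V] [DecidableRel G.Adj]

theorem IsProperEdgeColoring.card_filter_neighborFinset_le [DecidableEq β]
    (hc : IsProperEdgeColoring G c) (v : V) (S : Finset β) :
    #((G.neighborFinset v).filter fun x => c s(v, x) ∈ S) ≤ #S :=
  card_le_card_of_injOn _ (fun _ hx => (mem_filter.mp hx).2)
    ((hc.injOn_neighborSet v).mono fun _ hx => by simpa using (mem_filter.mp hx).1)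

theorem degree_le_card_sub_one_add_card_filter_not_mem [DecidableEq V] {v : V} {S : Finset V}
    (hv : v ∈ S) : G.degree v ≤ #S - 1 + #((G.neighborFinset v).filter (· ∉ S)) := by
  rw [← card_neighborFinset_eq_degree, ← card_filter_add_card_filter_not (· ∈ S),
    ← card_erase_of_mem hv]
  gcongr
  intro x hx
  obtain ⟨hadj, hxS⟩ := mem_filter.mp hx
  exact mem_erase.mpr ⟨(G.ne_of_adj ((mem_neighborFinset ..).mp hadj)).symm, hxS⟩

end Coloring

section RainbowPath

variable {V β : Type*} {G : SimpleGraph V} {c : Sym2 V → β} {w : ℕ → V} {k : ℕ}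

/-- A rainbow path with `k` edges, listed by its vertices `w 0, …, w k`; the values of `w` beyond
`k` play no role. -/
structure IsRainbowPath (G : SimpleGraph V) (c : Sym2 V → β) (w : ℕ → V) (k : ℕ) : Prop where
  injOn : ∀ i ≤ k, ∀ j ≤ k, w i = w j → i = j
  adj : ∀ i < k, G.Adj (w i) (w (i + 1))
  rainbow : ∀ i < k, ∀ j < k, c s(w i, w (i + 1)) = c s(w j, w (j + 1)) → i = j

namespace IsRainbowPath

theorem of_adj {a b : V} (hab : G.Adj a b) :
    IsRainbowPath G c (fun i => if i = 0 then a else b) 1 where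
  injOn i hi j hj hij := by
    interval_cases i <;> interval_cases j <;> simp_all [hab.ne, hab.ne.symm]
  adj i hi := by
    obtain rfl : i = 0 := by omega
    simpa using hab
  rainbow i hi j hj _ := by omega

theorem of_le (hw : IsRainbowPath G c w k) {j : ℕ} (hjk : j ≤ k) : IsRainbowPath G c w j where
  injOn a ha b hb := hw.injOn a (by omega) b (by omega)
  adj a ha := hw.adj a (by omega)
  rainbow a ha b hb := hw.rainbow a (by omega) b (by omega)

theorem hasRainbowCopy (hw : IsRainbowPath G c w k) : HasRainbowCopy (pathGraph (k + 1)) G c := by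
  have hedge : ∀ a b : Fin (k + 1), (pathGraph (k + 1)).Adj a b →
      min (a : ℕ) b < k ∧ s(w a, w b) = s(w (min (a : ℕ) b), w (min (a : ℕ) b + 1)) := by
    intro a b hab
    rcases pathGraph_adj.mp hab with h | h
    · rw [min_eq_left (by omega), ← h]
      exact ⟨by omega, rfl⟩
    · rw [min_eq_right (by omega), ← h]
      exact ⟨by omega, Sym2.eq_swap⟩
  refine ⟨⟨fun i => w i, fun a b hab => Fin.ext (hw.injOn a (by omega) b (by omega) hab)⟩,
    fun a b hab => ?_, fun e₁ he₁ e₂ he₂ hcol => ?_⟩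
  · obtain ⟨hlt, heq⟩ := hedge a b hab
    change s(w a, w b) ∈ G.edgeSet
    rw [heq]
    exact hw.adj _ hlt
  · induction e₁ using Sym2.ind with | _ a b =>
    induction e₂ using Sym2.ind with | _ a' b' =>
    obtain ⟨hlt, heq⟩ := hedge a b he₁
    obtain ⟨hlt', heq'⟩ := hedge a' b' he₂
    change c s(w a, w b) = c s(w a', w b') at hcol
    rw [heq, heq'] at hcol
    have := hw.rainbow _ hlt _ hlt' hcol
    have h₁ : (a : ℕ) + 1 = b ∨ (b : ℕ) + 1 = a := pathGraph_adj.mp he₁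
    have h₂ : (a' : ℕ) + 1 = b' ∨ (b' : ℕ) + 1 = a' := pathGraph_adj.mp he₂
    simp only [Sym2.eq_iff, Fin.ext_iff]
    omega

end IsRainbowPath

theorem exists_maximal_isRainbowPath {l : ℕ} (hG : G ≠ ⊥)
    (hno : ¬HasRainbowCopy (pathGraph (l + 1)) G c) :
    ∃ k w, 0 < k ∧ k < l ∧ IsRainbowPath G c w k ∧ ∀ w', ¬IsRainbowPath G c w' (k + 1) := by
  classical
  have hl : ∃ j, ¬∃ w, IsRainbowPath G c w j := ⟨l, fun ⟨_, hw⟩ => hno hw.hasRainbowCopy⟩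
  obtain ⟨a, b, hab⟩ : ∃ a b, G.Adj a b := by
    by_contra! h
    exact hG (eq_bot_iff.mpr fun a b hab => h a b hab)
  have hspec : ¬∃ w, IsRainbowPath G c w (Nat.find hl) := Nat.find_spec hl
  have hmin : ∀ j < Nat.find hl, ∃ w, IsRainbowPath G c w j :=
    fun j hj => not_not.mp (Nat.find_min hl hj)
  have hle : Nat.find hl ≤ l := Nat.find_min' hl fun ⟨_, hw⟩ => hno hw.hasRainbowCopy
  generalize Nat.find hl = m at hspec hmin hle
  have htwo : 2 ≤ m := by
    by_contra! h
    exact hspec ⟨_, (IsRainbowPath.of_adj (c := c) hab).of_le (by omega)⟩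
  obtain ⟨w, hw⟩ := hmin (m - 1) (by omega)
  refine ⟨m - 1, w, by omega, by omega, hw, fun w' hw' => hspec ⟨w', ?_⟩⟩
  rwa [Nat.sub_add_cancel (by omega)] at hw'

def pathVertices [DecidableEq V] (w : ℕ → V) (k : ℕ) : Finset V :=
  (range (k + 1)).image w

theorem mem_pathVertices [DecidableEq V] {x : V} :
    x ∈ pathVertices w k ↔ ∃ i ≤ k, w i = x := by
  simp [pathVertices]

/-- The path `w 0, …, w t, w k, w (k - 1), …, w (t + 1)`, obtained from `w 0, …, w k` through
the chord `w t w k`. -/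
def rotatePath (w : ℕ → V) (k t : ℕ) : ℕ → V :=
  fun i => if i ≤ t then w i else w (k + t + 1 - i)

/-- Off the chord, edge `i` of `rotatePath w k t` is edge `rotateIndex k t i` of `w`. -/
def rotateIndex (k t i : ℕ) : ℕ :=
  if i < t then i else k + t - i

section Rotate

variable {t i : ℕ}

theorem rotatePath_zero : rotatePath w k t 0 = w 0 :=
  if_pos t.zero_le

theorem edge_rotatePath_self (ht : t < k) :
    s(rotatePath w k t t, rotatePath w k t (t + 1)) = s(w k, w t) := by
  simp only [rotatePath, le_rfl, if_true, show ¬t + 1 ≤ t by omega, if_false,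
    show k + t + 1 - (t + 1) = k by omega, Sym2.eq_swap]

theorem edge_rotatePath_of_ne (hi : i < k) (hit : i ≠ t) :
    s(rotatePath w k t i, rotatePath w k t (i + 1)) =
      s(w (rotateIndex k t i), w (rotateIndex k t i + 1)) := by
  rcases Nat.lt_or_gt_of_ne hit with h | h
  · simp only [rotatePath, rotateIndex, if_pos h, if_pos h.le, if_pos (Nat.succ_le_of_lt h)]
  · simp only [rotatePath, rotateIndex, if_neg (Nat.not_le_of_lt h), if_neg (Nat.not_lt_of_lt h),
      if_neg (show ¬i + 1 ≤ t by omega), show k + t + 1 - (i + 1) = k + t - i by omega,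
      show k + t + 1 - i = k + t - i + 1 by omega, Sym2.eq_swap]

theorem rotateIndex_lt (hi : i < k) (hit : i ≠ t) : rotateIndex k t i < k := by
  unfold rotateIndex
  split_ifs <;> omega

theorem rotateIndex_ne (hi : i < k) (hit : i ≠ t) : rotateIndex k t i ≠ t := by
  unfold rotateIndex
  split_ifs <;> omega

theorem rotateIndex_injOn : Set.InjOn (rotateIndex k t) (Set.Iio k) := by
  intro i hi j hj h
  simp only [Set.mem_Iio, rotateIndex] at hi hj h
  split_ifs at h <;> omega

end Rotate

section Colors

variable [DecidableEq β]

def pathColors (c : Sym2 V → β) (w : ℕ → V) (k : ℕ) : Finset β :=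
  (range k).image fun i => c s(w i, w (i + 1))

theorem mem_pathColors {γ : β} :
    γ ∈ pathColors c w k ↔ ∃ i < k, c s(w i, w (i + 1)) = γ := by
  simp [pathColors]

def freshChords (G : SimpleGraph V) [DecidableRel G.Adj] (c : Sym2 V → β) (w : ℕ → V) (k : ℕ) :
    Finset ℕ :=
  (range k).filter fun t => G.Adj (w k) (w t) ∧ c s(w k, w t) ∉ pathColors c w k

namespace IsRainbowPath

theorem card_pathColors (hw : IsRainbowPath G c w k) : #(pathColors c w k) = k := by
  rw [pathColors, card_image_of_injOn, card_range]
  intro i hi j hj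
  exact hw.rainbow i (mem_range.mp hi) j (mem_range.mp hj)

theorem cons (hw : IsRainbowPath G c w k) {x : V} (hx : ∀ i ≤ k, x ≠ w i) (hadj : G.Adj (w 0) x)
    (hfresh : c s(w 0, x) ∉ pathColors c w k) :
    IsRainbowPath G c (fun | 0 => x | i + 1 => w i) (k + 1) where
  injOn i hi j hj hij := by
    rcases i with _ | i <;> rcases j with _ | j
    · rfl
    · exact absurd hij (hx j (by omega))
    · exact absurd hij.symm (hx i (by omega))
    · rw [hw.injOn i (by omega) j (by omega) hij]
  adj i hi := by
    rcases i with _ | i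
    · exact hadj.symm
    · exact hw.adj i (by omega)
  rainbow i hi j hj hij := by
    have hfresh' : ∀ i < k, c s(x, w 0) ≠ c s(w i, w (i + 1)) := fun i hi h =>
      hfresh (mem_pathColors.mpr ⟨i, hi, by rw [← h, Sym2.eq_swap]⟩)
    rcases i with _ | i <;> rcases j with _ | j
    · rfl
    · exact absurd hij (hfresh' j (by omega))
    · exact absurd hij.symm (hfresh' i (by omega))
    · rw [hw.rainbow i (by omega) j (by omega) hij]

theorem concat (hw : IsRainbowPath G c w k) {x : V} (hx : ∀ i ≤ k, x ≠ w i)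
    (hadj : G.Adj (w k) x) (hfresh : c s(w k, x) ∉ pathColors c w k) :
    IsRainbowPath G c (Function.update w (k + 1) x) (k + 1) := by
  have hle : ∀ i ≤ k, Function.update w (k + 1) x i = w i :=
    fun i hi => Function.update_of_ne (by omega) _ _
  have hfresh' : ∀ i < k, c s(w k, x) ≠ c s(w i, w (i + 1)) :=
    fun i hi h => hfresh (mem_pathColors.mpr ⟨i, hi, h.symm⟩)
  have hcases : ∀ i ≤ k + 1, i ≤ k ∨ i = k + 1 := fun i _ => by omega
  refine ⟨fun i hi j hj hij => ?_, fun i hi => ?_, fun i hi j hj hij => ?_⟩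
  · rcases hcases i hi with hi | rfl <;> rcases hcases j hj with hj | rfl
    · rw [hle i hi, hle j hj] at hij
      exact hw.injOn i hi j hj hij
    · rw [hle i hi, Function.update_self] at hij
      exact absurd hij.symm (hx i hi)
    · rw [hle j hj, Function.update_self] at hij
      exact absurd hij (hx j hj)
    · rfl
  · rcases (show i + 1 ≤ k ∨ i = k by omega) with hi | rfl
    · rw [hle i (by omega), hle (i + 1) hi]
      exact hw.adj i (by omega)
    · rwa [hle i le_rfl, Function.update_self]
  · rcases (show i < k ∨ i = k by omega) with hi | hi <;>
      rcases (show j < k ∨ j = k by omega) with hj | hj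
    · rw [hle i hi.le, hle (i + 1) hi, hle j hj.le, hle (j + 1) hj] at hij
      exact hw.rainbow i hi j hj hij
    · subst j
      rw [hle i hi.le, hle (i + 1) hi, hle k le_rfl, Function.update_self] at hij
      exact absurd hij.symm (hfresh' i hi)
    · subst i
      rw [hle j hj.le, hle (j + 1) hj, hle k le_rfl, Function.update_self] at hij
      exact absurd hij (hfresh' j hj)
    · rw [hi, hj]

theorem rotate {t : ℕ} (hw : IsRainbowPath G c w k) (ht : t < k)
    (hchord : G.Adj (w k) (w t)) (hfresh : c s(w k, w t) ∉ pathColors c w k) :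
    IsRainbowPath G c (rotatePath w k t) k where
  injOn i hi j hj hij := by
    simp only [rotatePath] at hij
    split_ifs at hij <;> have := hw.injOn _ (by omega) _ (by omega) hij <;> omega
  adj i hi := by
    rw [← mem_edgeSet]
    by_cases hit : i = t
    · rw [hit, edge_rotatePath_self ht]
      exact hchord
    · rw [edge_rotatePath_of_ne hi hit]
      exact hw.adj _ (rotateIndex_lt hi hit)
  rainbow i hi j hj hij := by
    have hfresh' : ∀ j < k, c s(w k, w t) ≠ c s(w j, w (j + 1)) :=
      fun j hj h => hfresh (mem_pathColors.mpr ⟨j, hj, h.symm⟩)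
    by_cases hit : i = t <;> by_cases hjt : j = t
    · rw [hit, hjt]
    · rw [hit, edge_rotatePath_self ht, edge_rotatePath_of_ne hj hjt] at hij
      exact absurd hij (hfresh' _ (rotateIndex_lt hj hjt))
    · rw [hjt, edge_rotatePath_self ht, edge_rotatePath_of_ne hi hit] at hij
      exact absurd hij.symm (hfresh' _ (rotateIndex_lt hi hit))
    · rw [edge_rotatePath_of_ne hi hit, edge_rotatePath_of_ne hj hjt] at hij
      exact rotateIndex_injOn hi hj
        (hw.rainbow _ (rotateIndex_lt hi hit) _ (rotateIndex_lt hj hjt) hij)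

theorem pathColors_rotatePath_subset (hw : IsRainbowPath G c w k) {t : ℕ} (ht : t < k) :
    pathColors c (rotatePath w k t) k ⊆
      insert (c s(w k, w t)) ((pathColors c w k).erase (c s(w t, w (t + 1)))) := by
  intro γ hγ
  obtain ⟨i, hi, rfl⟩ := mem_pathColors.mp hγ
  by_cases hit : i = t
  · rw [hit, edge_rotatePath_self ht]
    exact mem_insert_self _ _
  · rw [edge_rotatePath_of_ne hi hit]
    refine mem_insert_of_mem (mem_erase.mpr ⟨fun h => rotateIndex_ne hi hit ?_,
      mem_pathColors.mpr ⟨_, rotateIndex_lt hi hit, rfl⟩⟩)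
    exact hw.rainbow _ (rotateIndex_lt hi hit) _ ht h

theorem color_start_mem_pathColors (hw : IsRainbowPath G c w k)
    (hmax : ∀ w', ¬IsRainbowPath G c w' (k + 1)) {x : V} (hx : ∀ i ≤ k, x ≠ w i)
    (hadj : G.Adj (w 0) x) : c s(w 0, x) ∈ pathColors c w k :=
  not_not.mp fun h => hmax _ (hw.cons hx hadj h)

theorem color_end_mem_pathColors (hw : IsRainbowPath G c w k)
    (hmax : ∀ w', ¬IsRainbowPath G c w' (k + 1)) {x : V} (hx : ∀ i ≤ k, x ≠ w i)
    (hadj : G.Adj (w k) x) : c s(w k, x) ∈ pathColors c w k :=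
  not_not.mp fun h => hmax _ (hw.concat hx hadj h)

/-- A fresh chord `w t w k` frees the color of the edge `w t w (t + 1)` by rotation, so that color
cannot appear on an edge from `w 0` leaving the path. -/
theorem color_start_ne_of_chord (hw : IsRainbowPath G c w k)
    (hmax : ∀ w', ¬IsRainbowPath G c w' (k + 1)) {t : ℕ} (ht : t < k)
    (hchord : G.Adj (w k) (w t)) (hfresh : c s(w k, w t) ∉ pathColors c w k) {x : V}
    (hx : ∀ i ≤ k, x ≠ w i) (hadj : G.Adj (w 0) x) : c s(w 0, x) ≠ c s(w t, w (t + 1)) := by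
  intro h
  have hxr : ∀ i ≤ k, x ≠ rotatePath w k t i := by
    intro i hi
    simp only [rotatePath]
    split_ifs <;> exact hx _ (by omega)
  refine hmax _ ((hw.rotate ht hchord hfresh).cons hxr (rotatePath_zero ▸ hadj) fun hmem => ?_)
  rw [rotatePath_zero] at hmem
  rcases mem_insert.mp (hw.pathColors_rotatePath_subset ht hmem) with hchordColor | hmem'
  · exact hfresh (hchordColor ▸ hw.color_start_mem_pathColors hmax hx hadj)
  · exact (mem_erase.mp hmem').1 h

variable [Fintype V] [DecidableEq V] [DecidableRel G.Adj]

theorem degree_end_le (hc : IsProperEdgeColoring G c) (hw : IsRainbowPath G c w k)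
    (hmax : ∀ w', ¬IsRainbowPath G c w' (k + 1)) :
    G.degree (w k) ≤ k + #(freshChords G c w k) := by
  rw [← card_neighborFinset_eq_degree,
    ← card_filter_add_card_filter_not (fun x => c s(w k, x) ∈ pathColors c w k)]
  gcongr
  · exact (hc.card_filter_neighborFinset_le _ _).trans hw.card_pathColors.le
  · refine le_trans (card_le_card fun x hx => ?_) (card_image_le (f := w))
    obtain ⟨hadj, hfresh⟩ := mem_filter.mp hx
    rw [mem_neighborFinset] at hadj
    obtain ⟨t, htk, rfl⟩ : ∃ t ≤ k, x = w t := by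
      by_contra! hoff
      exact hfresh (hw.color_end_mem_pathColors hmax hoff hadj)
    have htk' : t ≠ k := by
      rintro rfl
      exact G.irrefl hadj
    exact mem_image_of_mem _ (mem_filter.mpr ⟨mem_range.mpr (by omega), hadj, hfresh⟩)

theorem card_filter_not_mem_pathVertices_add_card_freshChords_le (hc : IsProperEdgeColoring G c)
    (hw : IsRainbowPath G c w k) (hmax : ∀ w', ¬IsRainbowPath G c w' (k + 1)) :
    #((G.neighborFinset (w 0)).filter (· ∉ pathVertices w k)) + #(freshChords G c w k) ≤ k := by
  set offPath := (G.neighborFinset (w 0)).filter (· ∉ pathVertices w k)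
  have hoff : ∀ x ∈ offPath, G.Adj (w 0) x ∧ ∀ i ≤ k, x ≠ w i := fun x hx => by
    obtain ⟨hadj, hx⟩ := mem_filter.mp hx
    exact ⟨(mem_neighborFinset ..).mp hadj,
      fun i hi h => hx (mem_pathVertices.mpr ⟨i, hi, h.symm⟩)⟩
  have hchord : ∀ t ∈ freshChords G c w k,
      t < k ∧ G.Adj (w k) (w t) ∧ c s(w k, w t) ∉ pathColors c w k := fun t ht => by
    simpa [freshChords] using ht
  have hcardA : #(offPath.image fun x => c s(w 0, x)) = #offPath :=
    card_image_of_injOn ((hc.injOn_neighborSet _).mono fun x hx => (hoff x hx).1)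
  have hcardB : #((freshChords G c w k).image fun t => c s(w t, w (t + 1))) =
      #(freshChords G c w k) :=
    card_image_of_injOn fun i hi j hj => hw.rainbow i (hchord i hi).1 j (hchord j hj).1
  have hdisj : Disjoint (offPath.image fun x => c s(w 0, x))
      ((freshChords G c w k).image fun t => c s(w t, w (t + 1))) := by
    simp only [Finset.disjoint_left, mem_image, not_exists, not_and]
    rintro _ ⟨x, hx, rfl⟩ t ht
    obtain ⟨htk, hadj, hfresh⟩ := hchord t ht
    exact (hw.color_start_ne_of_chord hmax htk hadj hfresh (hoff x hx).2 (hoff x hx).1).symm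
  have hsub : (offPath.image fun x => c s(w 0, x)) ∪
      (freshChords G c w k).image (fun t => c s(w t, w (t + 1))) ⊆ pathColors c w k := by
    simp only [union_subset_iff, image_subset_iff]
    exact ⟨fun x hx => hw.color_start_mem_pathColors hmax (hoff x hx).2 (hoff x hx).1,
      fun t ht => mem_pathColors.mpr ⟨t, (hchord t ht).1, rfl⟩⟩
  rw [← hcardA, ← hcardB, ← card_union_of_disjoint hdisj]
  exact (card_le_card hsub).trans hw.card_pathColors.le

theorem degree_start_add_degree_end_le (hc : IsProperEdgeColoring G c)
    (hw : IsRainbowPath G c w k) (hmax : ∀ w', ¬IsRainbowPath G c w' (k + 1)) :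
    G.degree (w 0) + G.degree (w k) ≤ 3 * k := by
  have hstart := degree_le_card_sub_one_add_card_filter_not_mem (G := G)
    (mem_pathVertices.mpr ⟨0, k.zero_le, rfl⟩ : w 0 ∈ pathVertices w k)
  have hcard : #(pathVertices w k) ≤ k + 1 := card_image_le.trans (card_range _).le
  have hend := hw.degree_end_le hc hmax
  have hcount := hw.card_filter_not_mem_pathVertices_add_card_freshChords_le hc hmax
  omega

end IsRainbowPath

end Colors

theorem exists_mem_support_degree_le_of_not_hasRainbowCopy [Fintype V] [DecidableRel G.Adj]
    (hc : IsProperEdgeColoring G c) {l : ℕ} (hno : ¬HasRainbowCopy (pathGraph (l + 1)) G c)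
    (hG : G ≠ ⊥) : ∃ v ∈ G.support, G.degree v ≤ (3 * l - 1) / 2 := by
  classical
  obtain ⟨k, w, hk, hkl, hw, hmax⟩ := exists_maximal_isRainbowPath hG hno
  have hsum := hw.degree_start_add_degree_end_le hc hmax
  have hstart : w 0 ∈ G.support := ⟨w 1, hw.adj 0 hk⟩
  have hend : w k ∈ G.support := ⟨w (k - 1), by
    simpa [Nat.sub_add_cancel hk] using (hw.adj (k - 1) (by omega)).symm⟩
  rcases le_total (G.degree (w 0)) (G.degree (w k)) with h | h
  · exact ⟨w 0, hstart, by omega⟩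
  · exact ⟨w k, hend, by omega⟩

end RainbowPath

theorem card_edgeFinset_le_mul_card_support {V : Type*} [Fintype V] [DecidableEq V]
    {P : SimpleGraph V → Prop} (hP : ∀ ⦃G H : SimpleGraph V⦄, H ≤ G → P G → P H) {d : ℕ}
    (hdeg : ∀ (G : SimpleGraph V) [DecidableRel G.Adj], P G → G ≠ ⊥ →
      ∃ v ∈ G.support, G.degree v ≤ d)
    (G : SimpleGraph V) [DecidableRel G.Adj] (hG : P G) :
    #G.edgeFinset ≤ d * Fintype.card G.support := by
  suffices ∀ n, ∀ (G : SimpleGraph V) [DecidableRel G.Adj], P G → Fintype.card G.support ≤ n →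
      #G.edgeFinset ≤ d * n from this _ G hG le_rfl
  intro n
  induction n with
  | zero =>
    intro G _ hG hn
    by_contra hpos
    obtain ⟨v, hv, -⟩ := hdeg G hG fun hbot => hpos (by simp [edgeFinset_eq_empty.mpr hbot])
    exact (Fintype.card_pos_iff (α := G.support).mpr ⟨⟨v, hv⟩⟩).ne' (by omega)
  | succ n ih =>
    intro G _ hG hn
    by_cases hbot : G = ⊥
    · simp [edgeFinset_eq_empty.mpr hbot]
    obtain ⟨v, hv, hdv⟩ := hdeg G hG hbot
    have hdel := ih (G.deleteIncidenceSet v) (hP (G.deleteIncidenceSet_le v) hG)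
      ((card_support_deleteIncidenceSet G hv).trans (by omega))
    have hcard := card_edgeFinset_deleteIncidenceSet G v
    have hdeg_le : G.degree v ≤ #G.edgeFinset :=
      card_incidenceFinset_eq_degree G v ▸ card_le_card (G.incidenceFinset_subset v)
    rw [Nat.mul_succ]
    omega

/-- Here `⌈(3l-2)/2⌉ = (3l-1)/2` with natural division, and `P_l`, the path with `l` edges, is
`pathGraph (l+1)`. -/
theorem rainbowTuran_path_upperBound_general (l : ℕ) (n : ℕ) :
    ∀ m ∈ rainbowExSet n (pathGraph (l + 1)), m ≤ (3 * l - 1) / 2 * n := by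
  classical
  rintro m ⟨G, c, hc, hno, rfl⟩
  have hbound := card_edgeFinset_le_mul_card_support
    (P := fun H => IsProperEdgeColoring H c ∧ ¬HasRainbowCopy (pathGraph (l + 1)) H c)
    (fun G H hHG hG => ⟨hG.1.mono hHG, fun h => hG.2 (h.mono hHG)⟩)
    (fun H _ hH hne => exists_mem_support_degree_le_of_not_hasRainbowCopy hH.1 hH.2 hne) G ⟨hc, hno⟩
  calc G.edgeSet.ncard = #G.edgeFinset := by rw [← coe_edgeFinset, Set.ncard_coe_finset]
    _ ≤ (3 * l - 1) / 2 * Fintype.card G.support := hbound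
    _ ≤ (3 * l - 1) / 2 * n :=
      Nat.mul_le_mul_left _ ((Fintype.card_subtype_le _).trans (Fintype.card_fin n).le)

/-- For every fixed `l ≥ 1` and every `n`, `ex*(n, P_l) ≤ ⌈(3l-2)/2⌉·n`
(here `⌈(3l-2)/2⌉ = (3l-1)/2` with natural division, and `P_l`, the path with `l`
edges, is `pathGraph (l+1)`). -/
theorem rainbowTuran_path_upperBound (l : ℕ) (hl : 1 ≤ l) (n : ℕ) :
    ∀ m ∈ rainbowExSet n (pathGraph (l + 1)), m ≤ (3 * l - 1) / 2 * n :=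
  rainbowTuran_path_upperBound_general l n
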